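/- For B = I_p + c·off(A) with c ∈ [0,1] and A any p×p real matrix, the maximum over permutation matrices P of tr(P B̃) equals Σᵢ 1/(c² Σ_{j≠i} Aᵢⱼ² + 1), where B̃ᵢⱼ = Bᵢⱼ²/Σₖ Bᵢₖ², provided Aᵢⱼ² ≤ 1 for all i ≠ j. -/

import Mathlib

open Matrix Finset

def permMat (p : ℕ) (σ : Equiv.Perm (Fin p)) : Matrix (Fin p) (Fin p) ℝ :=
  Matrix.of fun i j => if σ j = i then 1 else 0

def PJDset (p : ℕ) : Set (Matrix (Fin p) (Fin p) ℝ) :=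
  {C | ∃ (σ : Equiv.Perm (Fin p)) (J D : Fin p → ℝ),
    (∀ i, J i = 1 ∨ J i = -1) ∧ (∀ i, 0 < D i) ∧
    C = permMat p σ * Matrix.diagonal J * Matrix.diagonal D}

noncomputable def Atilde {p : ℕ} (A : Matrix (Fin p) (Fin p) ℝ) : Matrix (Fin p) (Fin p) ℝ :=
  Matrix.of fun i j => (A i j) ^ 2 / ∑ k, (A i k) ^ 2

def offd {p : ℕ} (A : Matrix (Fin p) (Fin p) ℝ) : Matrix (Fin p) (Fin p) ℝ :=
  Matrix.of fun i j => if i = j then 0 else A i j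

/-!
Row `i` of `B̃` is row `i` of `B` squared and scaled by one positive constant, so each entry of
`B̃` is at most the diagonal entry of its row as soon as `Bᵢⱼ² ≤ Bᵢᵢ² = 1`; hence no permutation
beats the identity, and the trace of `B̃` is `∑ᵢ 1 / ∑ₖ Bᵢₖ²`.
-/

lemma trace_permMat_mul (p : ℕ) (σ : Equiv.Perm (Fin p)) (M : Matrix (Fin p) (Fin p) ℝ) :
    trace (permMat p σ * M) = ∑ k, M k (σ k) := by
  simp only [Matrix.trace, Matrix.diag, mul_apply, permMat, of_apply, ite_mul, one_mul, zero_mul]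
  rw [Finset.sum_comm]
  exact Finset.sum_congr rfl fun k _ => by simp

lemma sup'_trace_permMat_mul_eq_trace {p : ℕ} (M : Matrix (Fin p) (Fin p) ℝ)
    (hM : ∀ i j, M i j ≤ M i i) :
    univ.sup' univ_nonempty (fun σ : Equiv.Perm (Fin p) => trace (permMat p σ * M))
      = trace M := by
  refine le_antisymm (Finset.sup'_le _ _ fun σ _ => ?_) ?_
  · rw [trace_permMat_mul]
    exact Finset.sum_le_sum fun k _ => hM k (σ k)
  · calc trace M = trace (permMat p 1 * M) := by rw [trace_permMat_mul]; rfl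
      _ ≤ _ := Finset.le_sup' (fun σ : Equiv.Perm (Fin p) => trace (permMat p σ * M)) (mem_univ 1)

lemma Atilde_apply_le_Atilde_apply_self {p : ℕ} (B : Matrix (Fin p) (Fin p) ℝ) {i j : Fin p}
    (h : B i j ^ 2 ≤ B i i ^ 2) : Atilde B i j ≤ Atilde B i i :=
  div_le_div_of_nonneg_right h (Finset.sum_nonneg fun _ _ => sq_nonneg _)

lemma one_add_smul_offd_apply {p : ℕ} (A : Matrix (Fin p) (Fin p) ℝ) (c : ℝ) (i j : Fin p) :
    (1 + c • offd A) i j = if i = j then 1 else c * A i j := by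
  by_cases h : i = j <;> simp [offd, one_apply, h]

lemma sum_sq_one_add_smul_offd {p : ℕ} (A : Matrix (Fin p) (Fin p) ℝ) (c : ℝ) (i : Fin p) :
    ∑ k, (1 + c • offd A) i k ^ 2 = c ^ 2 * ∑ j ∈ univ.erase i, A i j ^ 2 + 1 := by
  rw [← Finset.add_sum_erase _ _ (mem_univ i), add_comm, Finset.mul_sum]
  congr 1
  · exact Finset.sum_congr rfl fun j hj => by
      rw [one_add_smul_offd_apply, if_neg (Finset.ne_of_mem_erase hj).symm]; ring
  · rw [one_add_smul_offd_apply, if_pos rfl, one_pow]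

lemma trace_Atilde_one_add_smul_offd {p : ℕ} (A : Matrix (Fin p) (Fin p) ℝ) (c : ℝ) :
    trace (Atilde (1 + c • offd A))
      = ∑ i, 1 / (c ^ 2 * ∑ j ∈ univ.erase i, A i j ^ 2 + 1) := by
  refine Finset.sum_congr rfl fun i _ => ?_
  rw [Matrix.diag, Atilde, of_apply, sum_sq_one_add_smul_offd, one_add_smul_offd_apply, if_pos rfl,
    one_pow]

theorem stmt13_general (p : ℕ) (A : Matrix (Fin p) (Fin p) ℝ)
    (hA : ∀ i j, i ≠ j → (A i j) ^ 2 ≤ 1) (c : ℝ) (hc : c ∈ Set.Icc (0 : ℝ) 1) :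
    Finset.univ.sup' Finset.univ_nonempty
      (fun σ : Equiv.Perm (Fin p) =>
        Matrix.trace (permMat p σ * Atilde (1 + c • offd A)))
      = ∑ i, 1 / (c ^ 2 * (∑ j ∈ Finset.univ.erase i, (A i j) ^ 2) + 1) := by
  have hc2 : c ^ 2 ≤ 1 := pow_le_one₀ hc.1 hc.2
  rw [sup'_trace_permMat_mul_eq_trace, trace_Atilde_one_add_smul_offd]
  intro i j
  apply Atilde_apply_le_Atilde_apply_self
  rw [one_add_smul_offd_apply, one_add_smul_offd_apply, if_pos rfl]
  split_ifs with hij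
  · rfl
  · rw [mul_pow, one_pow]
    exact mul_le_one₀ hc2 (sq_nonneg _) (hA i j hij)

theorem stmt13 (p : ℕ) (hp : 2 ≤ p) (A : Matrix (Fin p) (Fin p) ℝ)
    (hA : ∀ i j, i ≠ j → (A i j) ^ 2 ≤ 1) (c : ℝ) (hc : c ∈ Set.Icc (0 : ℝ) 1) :
    Finset.univ.sup' Finset.univ_nonempty
      (fun σ : Equiv.Perm (Fin p) =>
        Matrix.trace (permMat p σ * Atilde (1 + c • offd A)))
      = ∑ i, 1 / (c ^ 2 * (∑ j ∈ Finset.univ.erase i, (A i j) ^ 2) + 1) :=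
  stmt13_general p A hA c hc
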